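/- Let X be a finite ground set, 𝒮 = {S₁,…,S_m} a collection of subsets of X, and U ⊆ X. Build the finite simple graph G = (V,E) as follows: V = X ∪ {s₁,…,s_m} ∪ {y, y'} ∪ {z₁, z₂, z₃, z₄}, with edges x sᵢ for every x ∈ X and i with x ∈ Sᵢ; the edge y'y and edges xy for every x ∈ X; and the path edges z₁z₂, z₂z₃, z₃z₄ together with edges z₁sᵢ for every 1 ≤ i ≤ m. Let U' = U ∪ {y, z₂, z₃}. Then G has a minimal dominating set S with U' ⊆ S if and only if there exists an inclusion-minimal hitting set H of (X, 𝒮) with U ⊆ H. -/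

import Mathlib

/-!
A minimal dominating set `D ⊇ U'` must leave `z₁` and every `sᵢ` outside: `z₁` is the only
possible private neighbour of `z₂`, since `z₂` and `z₃` are dominated by `z₃`. Hence each `sᵢ`
is dominated by some `x ∈ Sᵢ ∩ D`, so `D ∩ X` is a hitting set; and as `y` dominates every
element vertex, the private neighbour of `x ∈ D ∩ X` is some `sᵢ`, which says exactly that
`(D ∩ X) \ {x}` misses `Sᵢ`. Conversely, for a minimal hitting set `H` the set
`H ∪ {y, z₂, z₃}` dominates the graph, and its vertices have the private neighbours
`sᵢ` (for `x ∈ H`, with `Sᵢ ∩ H = {x}`), `y'`, `z₁` and `z₄`.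
-/

/-- Vertices of the graph built from a hitting-set instance `(X, S₁,…,S_m)`:
the ground elements, one vertex per hyperedge, and the extra vertices
`y, y', z₁, z₂, z₃, z₄`. -/
inductive V13 (X : Type) (m : ℕ) : Type
  | elem : X → V13 X m
  | sv : Fin m → V13 X m
  | y : V13 X m
  | y' : V13 X m
  | z1 : V13 X m
  | z2 : V13 X m
  | z3 : V13 X m
  | z4 : V13 X m

/-- Edges of the constructed graph. -/
def E13 (X : Type) (m : ℕ) (S : Fin m → Set X) : Set (Sym2 (V13 X m)) :=
  {e | (∃ x : X, ∃ i : Fin m, x ∈ S i ∧ e = s(V13.elem x, V13.sv i)) ∨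
       e = s(V13.y', V13.y) ∨
       (∃ x : X, e = s(V13.elem x, V13.y)) ∨
       e = s(V13.z1, V13.z2) ∨ e = s(V13.z2, V13.z3) ∨ e = s(V13.z3, V13.z4) ∨
       (∃ i : Fin m, e = s(V13.z1, V13.sv i))}

/-- The pre-solution `U' = U ∪ {y, z₂, z₃}` (as vertices of the constructed graph). -/
def U13 (X : Type) (m : ℕ) (U : Set X) : Set (V13 X m) :=
  (V13.elem '' U) ∪ {V13.y, V13.z2, V13.z3}

/-- `S` is a dominating set of the graph with edge set `E`. -/
def DomSet {V : Type*} (E : Set (Sym2 V)) (S : Set V) : Prop :=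
  ∀ v : V, v ∈ S ∨ ∃ u ∈ S, s(u, v) ∈ E

def IsHittingSet {ι X : Type*} (S : ι → Set X) (H : Set X) : Prop :=
  ∀ i, (H ∩ S i).Nonempty

theorem IsHittingSet.mono {ι X : Type*} {S : ι → Set X} {H H' : Set X} (hH : IsHittingSet S H)
    (hHH' : H ⊆ H') : IsHittingSet S H' :=
  fun i => (hH i).mono (Set.inter_subset_inter_left _ hHH')

theorem minimal_isHittingSet_iff {ι X : Type*} {S : ι → Set X} {H : Set X} :
    Minimal (IsHittingSet S) H ↔ IsHittingSet S H ∧ ∀ x ∈ H, ¬ IsHittingSet S (H \ {x}) :=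
  Set.minimal_iff_forall_sdiff_singleton fun _ _ h h' => h.mono h'

section DomSet

variable {V : Type*} {E : Set (Sym2 V)} {D : Set V}

theorem DomSet.mono {D' : Set V} (hD : DomSet E D) (hDD' : D ⊆ D') : DomSet E D' := fun v =>
  (hD v).imp (fun hv => hDD' hv) fun ⟨u, hu, huv⟩ => ⟨u, hDD' hu, huv⟩

theorem not_domSet_iff : ¬ DomSet E D ↔ ∃ w, w ∉ D ∧ ∀ u ∈ D, s(u, w) ∉ E := by
  simp only [DomSet, not_forall, not_or, not_exists, not_and]

theorem minimal_domSet_iff :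
    Minimal (DomSet E) D ↔ DomSet E D ∧ ∀ v ∈ D, ¬ DomSet E (D \ {v}) :=
  Set.minimal_iff_forall_sdiff_singleton fun _ _ h h' => h.mono h'

theorem Minimal.exists_private_neighbour (hD : Minimal (DomSet E) D) {v : V} (hv : v ∈ D) :
    ∃ w, (w = v ∨ s(v, w) ∈ E) ∧ ∀ u ∈ D, u ≠ v → u ≠ w ∧ s(u, w) ∉ E := by
  obtain ⟨w, hwD, hw⟩ := not_domSet_iff.1 ((minimal_domSet_iff.1 hD).2 v hv)
  refine ⟨w, ?_, fun u hu huv => ⟨fun huw => hwD (huw ▸ ⟨hu, huv⟩), hw u ⟨hu, huv⟩⟩⟩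
  rcases hD.1 w with hw' | ⟨u, hu, huw⟩
  · exact .inl (by_contra fun hwv => hwD ⟨hw', hwv⟩)
  · obtain rfl : u = v := by_contra fun huv => hw u ⟨hu, huv⟩ huw
    exact .inr huw

end DomSet

section Reduction

variable {X : Type} {m : ℕ} {S : Fin m → Set X}

theorem mk_sv_mem_E13 {u : V13 X m} {i : Fin m} :
    s(u, V13.sv i) ∈ E13 X m S ↔ (∃ x ∈ S i, u = V13.elem x) ∨ u = V13.z1 := by
  simp [E13]

theorem mk_z1_mem_E13 {u : V13 X m} :
    s(u, V13.z1) ∈ E13 X m S ↔ u = V13.z2 ∨ ∃ i, u = V13.sv i := by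
  simp [E13]

theorem mk_z2_mem_E13 {w : V13 X m} :
    s(V13.z2, w) ∈ E13 X m S ↔ w = V13.z1 ∨ w = V13.z3 := by
  simp [E13]

theorem mk_elem_mem_E13 {x : X} {w : V13 X m} :
    s(V13.elem x, w) ∈ E13 X m S ↔ (∃ i, x ∈ S i ∧ w = V13.sv i) ∨ w = V13.y := by
  simp [E13]

theorem mk_y'_mem_E13 {u : V13 X m} : s(u, V13.y') ∈ E13 X m S ↔ u = V13.y := by
  simp [E13]

theorem mk_z4_mem_E13 {u : V13 X m} : s(u, V13.z4) ∈ E13 X m S ↔ u = V13.z3 := by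
  simp [E13]

section MinimalDominatingToHitting

variable {D : Set (V13 X m)}

theorem z1_notMem_and_sv_notMem (hD : Minimal (DomSet (E13 X m S)) D) (hz2 : V13.z2 ∈ D)
    (hz3 : V13.z3 ∈ D) : V13.z1 ∉ D ∧ ∀ i, V13.sv i ∉ D := by
  obtain ⟨w, hw, hpriv⟩ := hD.exists_private_neighbour hz2
  have hz3w := hpriv _ hz3 (by simp)
  obtain rfl : w = V13.z1 := by
    rcases hw with rfl | hw
    · exact absurd (by simp [E13]) hz3w.2
    · exact (mk_z2_mem_E13.1 hw).resolve_right fun h => hz3w.1 h.symm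
  exact ⟨fun h => (hpriv _ h (by simp)).1 rfl,
    fun i h => (hpriv _ h (by simp)).2 (mk_z1_mem_E13.2 (.inr ⟨i, rfl⟩))⟩

theorem isHittingSet_preimage_elem (hD : DomSet (E13 X m S) D) (hz1 : V13.z1 ∉ D)
    (hsv : ∀ i, V13.sv i ∉ D) : IsHittingSet S (V13.elem ⁻¹' D) := fun i => by
  obtain ⟨u, hu, hui⟩ := (hD (V13.sv i)).resolve_left (hsv i)
  rcases mk_sv_mem_E13.1 hui with ⟨x, hx, rfl⟩ | rfl
  · exact ⟨x, hu, hx⟩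
  · exact absurd hu hz1

theorem not_isHittingSet_preimage_elem_sdiff (hD : Minimal (DomSet (E13 X m S)) D)
    (hy : V13.y ∈ D) {x : X} (hx : V13.elem x ∈ D) :
    ¬ IsHittingSet S (V13.elem ⁻¹' D \ {x}) := by
  obtain ⟨w, hw, hpriv⟩ := hD.exists_private_neighbour hx
  have hyw := hpriv _ hy (by simp)
  obtain ⟨i, hxi, rfl⟩ : ∃ i, x ∈ S i ∧ w = V13.sv i := by
    rcases hw with rfl | hw
    · exact absurd (by simp [E13]) hyw.2
    · exact (mk_elem_mem_E13.1 hw).resolve_right fun h => hyw.1 h.symm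
  intro hH
  obtain ⟨x', ⟨hx', hx'x⟩, hx'i⟩ := hH i
  exact (hpriv _ hx' (by simpa using hx'x)).2 (mk_sv_mem_E13.2 (.inl ⟨x', hx'i, rfl⟩))

theorem minimal_isHittingSet_preimage_elem (hD : Minimal (DomSet (E13 X m S)) D)
    (hy : V13.y ∈ D) (hz2 : V13.z2 ∈ D) (hz3 : V13.z3 ∈ D) :
    Minimal (IsHittingSet S) (V13.elem ⁻¹' D) := by
  obtain ⟨hz1, hsv⟩ := z1_notMem_and_sv_notMem hD hz2 hz3
  exact minimal_isHittingSet_iff.2 ⟨isHittingSet_preimage_elem hD.1 hz1 hsv,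
    fun _ hx => not_isHittingSet_preimage_elem_sdiff hD hy hx⟩

end MinimalDominatingToHitting

section MinimalHittingToDominating

variable {H : Set X}

theorem domSet_U13 (hH : IsHittingSet S H) : DomSet (E13 X m S) (U13 X m H) := by
  have hy : V13.y ∈ U13 X m H := by simp [U13]
  have hz2 : V13.z2 ∈ U13 X m H := by simp [U13]
  have hz3 : V13.z3 ∈ U13 X m H := by simp [U13]
  intro v
  cases v with
  | elem x => exact .inr ⟨V13.y, hy, Sym2.eq_swap ▸ mk_elem_mem_E13.2 (.inr rfl)⟩
  | sv i =>
    obtain ⟨x, hxH, hxi⟩ := hH i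
    exact .inr ⟨V13.elem x, .inl ⟨x, hxH, rfl⟩, mk_sv_mem_E13.2 (.inl ⟨x, hxi, rfl⟩)⟩
  | y => exact .inl hy
  | y' => exact .inr ⟨V13.y, hy, mk_y'_mem_E13.2 rfl⟩
  | z1 => exact .inr ⟨V13.z2, hz2, mk_z1_mem_E13.2 (.inl rfl)⟩
  | z2 => exact .inl hz2
  | z3 => exact .inl hz3
  | z4 => exact .inr ⟨V13.z3, hz3, mk_z4_mem_E13.2 rfl⟩

theorem not_domSet_U13_sdiff (hH : Minimal (IsHittingSet S) H) {v : V13 X m}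
    (hv : v ∈ U13 X m H) : ¬ DomSet (E13 X m S) (U13 X m H \ {v}) := by
  refine not_domSet_iff.2 ?_
  rcases hv with ⟨x, hx, rfl⟩ | hv
  · obtain ⟨i, hi⟩ : ∃ i, ¬ ((H \ {x}) ∩ S i).Nonempty :=
      not_forall.1 ((minimal_isHittingSet_iff.1 hH).2 x hx)
    refine ⟨V13.sv i, fun h => by simp [U13] at h, fun u hu hui => ?_⟩
    rcases mk_sv_mem_E13.1 hui with ⟨x', hx'i, rfl⟩ | rfl
    · exact hi ⟨x', by simpa [U13] using hu, hx'i⟩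
    · simp [U13] at hu
  · simp only [Set.mem_insert_iff, Set.mem_singleton_iff] at hv
    rcases hv with rfl | rfl | rfl
    · exact ⟨V13.y', by simp [U13], fun u hu h => hu.2 (mk_y'_mem_E13.1 h)⟩
    · refine ⟨V13.z1, by simp [U13], fun u hu h => ?_⟩
      rcases mk_z1_mem_E13.1 h with rfl | ⟨i, rfl⟩
      · exact hu.2 rfl
      · simp [U13] at hu
    · exact ⟨V13.z4, by simp [U13], fun u hu h => hu.2 (mk_z4_mem_E13.1 h)⟩

theorem minimal_domSet_U13 (hH : Minimal (IsHittingSet S) H) :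
    Minimal (DomSet (E13 X m S)) (U13 X m H) :=
  minimal_domSet_iff.2 ⟨domSet_U13 hH.1, fun _ hv => not_domSet_U13_sdiff hH hv⟩

end MinimalHittingToDominating

end Reduction

theorem stmt_13 (X : Type) (m : ℕ) (S : Fin m → Set X) (U : Set X) :
    (∃ D : Set (V13 X m), U13 X m U ⊆ D ∧ DomSet (E13 X m S) D ∧
        ∀ D' : Set (V13 X m), D' ⊂ D → ¬ DomSet (E13 X m S) D') ↔
      (∃ H : Set X, U ⊆ H ∧ (∀ i : Fin m, (H ∩ S i).Nonempty) ∧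
        ∀ H' : Set X, H' ⊂ H → ¬ ∀ i : Fin m, (H' ∩ S i).Nonempty) := by
  constructor
  · rintro ⟨D, hUD, hD⟩
    have hU'D : ∀ v ∈ ({V13.y, V13.z2, V13.z3} : Set (V13 X m)), v ∈ D := fun v hv =>
      hUD (.inr hv)
    exact ⟨V13.elem ⁻¹' D, fun x hx => hUD (.inl ⟨x, hx, rfl⟩),
      Set.minimal_iff_forall_ssubset.1 <| minimal_isHittingSet_preimage_elem
        (Set.minimal_iff_forall_ssubset.2 hD) (hU'D _ (by simp)) (hU'D _ (by simp))
        (hU'D _ (by simp))⟩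
  · rintro ⟨H, hUH, hH⟩
    exact ⟨U13 X m H, Set.union_subset_union_left _ (Set.image_mono hUH),
      Set.minimal_iff_forall_ssubset.1 (minimal_domSet_U13 (Set.minimal_iff_forall_ssubset.2 hH))⟩
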